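/- arXiv:2511.19903 — 2 statements merged into one kernel-verified Lean document; each statement's English description precedes it below -/
import Mathlib

section
/- The bracket {·,·}′ satisfies the Jacobi identity: for all smooth functions f, g, h : ℝⁿ×ℝⁿ → ℝ, {{f,g}′, h}′ + {{g,h}′, f}′ + {{h,f}′, g}′ = 0 at every point of ℝⁿ×ℝⁿ; hence {·,·}′ is a Poisson bracket. -/
open scoped BigOperators

noncomputable section

/-- Phase space `T*ℝⁿ = ℝⁿ × ℝⁿ`, points `x = (q, p)`. -/
abbrev Phase (n : ℕ) := (Fin n → ℝ) × (Fin n → ℝ)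

/-- Partial derivative `∂f/∂qᵢ` of a function on phase space. -/
def dq {n : ℕ} (f : Phase n → ℝ) (i : Fin n) (x : Phase n) : ℝ :=
  fderiv ℝ f x (Pi.single i 1, 0)

/-- Partial derivative `∂f/∂pᵢ` of a function on phase space. -/
def dp {n : ℕ} (f : Phase n → ℝ) (i : Fin n) (x : Phase n) : ℝ :=
  fderiv ℝ f x (0, Pi.single i 1)

/-- Partial derivative `∂V/∂qᵢ` of a potential on configuration space. -/
def dV {n : ℕ} (V : (Fin n → ℝ) → ℝ) (i : Fin n) (q : Fin n → ℝ) : ℝ :=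
  fderiv ℝ V q (Pi.single i 1)

/-- The Hamiltonian `H(q,p) = Σᵢ pᵢ²/(2mᵢ) + V(q)`. -/
def Ham {n : ℕ} (m : Fin n → ℝ) (V : (Fin n → ℝ) → ℝ) (x : Phase n) : ℝ :=
  (∑ i, x.2 i ^ 2 / (2 * m i)) + V x.1

/-- The Hamiltonian vector field `X` acting on functions:
`Xf = Σᵢ (pᵢ/mᵢ) ∂f/∂qᵢ − (∂V/∂qᵢ) ∂f/∂pᵢ`. -/
def Xop {n : ℕ} (m : Fin n → ℝ) (V : (Fin n → ℝ) → ℝ) (f : Phase n → ℝ) (x : Phase n) : ℝ :=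
  ∑ i, (x.2 i / m i * dq f i x - dV V i x.1 * dp f i x)

/-- The canonical Poisson bracket `{f,g} = Σᵢ (∂f/∂qᵢ ∂g/∂pᵢ − ∂f/∂pᵢ ∂g/∂qᵢ)`. -/
def bracketC {n : ℕ} (f g : Phase n → ℝ) (x : Phase n) : ℝ :=
  ∑ i, (dq f i x * dp g i x - dp f i x * dq g i x)

/-- `Aᵢⱼ = pᵢqⱼ/mᵢ − pⱼqᵢ/mⱼ`. -/
def Acoef {n : ℕ} (m : Fin n → ℝ) (i j : Fin n) (x : Phase n) : ℝ :=
  x.2 i * x.1 j / m i - x.2 j * x.1 i / m j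

/-- `Bᵢⱼ = (k/(2mᵢ)) pᵢpⱼ + qᵢ ∂V/∂qⱼ`. -/
def Bcoef {n : ℕ} (m : Fin n → ℝ) (k : ℝ) (V : (Fin n → ℝ) → ℝ) (i j : Fin n)
    (x : Phase n) : ℝ :=
  k / (2 * m i) * (x.2 i * x.2 j) + x.1 i * dV V j x.1

/-- `Cᵢⱼ = (k/2)(pᵢ ∂V/∂qⱼ − pⱼ ∂V/∂qᵢ)`. -/
def Ccoef {n : ℕ} (k : ℝ) (V : (Fin n → ℝ) → ℝ) (i j : Fin n) (x : Phase n) : ℝ :=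
  k / 2 * (x.2 i * dV V j x.1 - x.2 j * dV V i x.1)

/-- The bracket `{f,g}′` associated with the bivector `P′`. -/
def bracketP {n : ℕ} (m : Fin n → ℝ) (k : ℝ) (V : (Fin n → ℝ) → ℝ)
    (f g : Phase n → ℝ) (x : Phase n) : ℝ :=
  ∑ i, ∑ j,
    (Acoef m i j x * (dq f i x * dq g j x)
      + Bcoef m k V i j x * (dq f i x * dp g j x - dp f j x * dq g i x)
      + Ccoef k V i j x * (dp f i x * dp g j x))

def Zop {n : ℕ} (k : ℝ) (f : Phase n → ℝ) (x : Phase n) : ℝ :=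
  ∑ i, (x.1 i * dq f i x + k / 2 * x.2 i * dp f i x)

theorem contDiff_fderiv_apply {E F : Type*} [NormedAddCommGroup E] [NormedSpace ℝ E]
    [NormedAddCommGroup F] [NormedSpace ℝ F] {f : E → F} (hf : ContDiff ℝ (⊤ : ℕ∞) f) (v : E) :
    ContDiff ℝ (⊤ : ℕ∞) (fun x => fderiv ℝ f x v) :=
  (hf.fderiv_right (by simp)).clm_apply contDiff_const

variable {E F : Type*} [NormedAddCommGroup E] [NormedSpace ℝ E] [NormedAddCommGroup F] [NormedSpace ℝ F] in
theorem fderiv_fderiv_apply {f : E → F} (hf : ContDiff ℝ (⊤ : ℕ∞) f) (v w : E) (x : E) :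
    fderiv ℝ (fun y => fderiv ℝ f y v) x w = fderiv ℝ (fderiv ℝ f) x w v := by
  have hd : DifferentiableAt ℝ (fderiv ℝ f) x :=
    ((hf.fderiv_right (WithTop.coe_le_coe.mpr (le_top : (1 + 1 : ℕ∞) ≤ ⊤) : (1 : WithTop ℕ∞) + 1 ≤ ((⊤ : ℕ∞) : WithTop ℕ∞))).differentiable one_ne_zero).differentiableAt
  rw [fderiv_clm_apply hd (differentiableAt_const v)]
  simp

variable {E F : Type*} [NormedAddCommGroup E] [NormedSpace ℝ E] [NormedAddCommGroup F] [NormedSpace ℝ F] in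
theorem D2_symm {f : E → F} (hf : ContDiff ℝ (⊤ : ℕ∞) f) (v w : E) (x : E) :
    fderiv ℝ (fun y => fderiv ℝ f y v) x w = fderiv ℝ (fun y => fderiv ℝ f y w) x v := by
  rw [fderiv_fderiv_apply hf v w x, fderiv_fderiv_apply hf w v x]
  exact second_derivative_symmetric (f' := fderiv ℝ f)
    (fun y => ((hf.differentiable (by simp)) y).hasFDerivAt)
    (((hf.fderiv_right (WithTop.coe_le_coe.mpr (le_top : (1 + 1 : ℕ∞) ≤ ⊤) : (1 : WithTop ℕ∞) + 1 ≤ ((⊤ : ℕ∞) : WithTop ℕ∞))).differentiable one_ne_zero) x).hasFDerivAt w v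

-- coordinate functions
theorem contDiff_coord_q (i : Fin n) : ContDiff ℝ (⊤ : ℕ∞) (fun y : Phase n => y.1 i) :=
  (contDiff_apply ℝ ℝ i).comp contDiff_fst

theorem contDiff_coord_p (i : Fin n) : ContDiff ℝ (⊤ : ℕ∞) (fun y : Phase n => y.2 i) :=
  (contDiff_apply ℝ ℝ i).comp contDiff_snd

theorem fderiv_coord_q (i : Fin n) (x v : Phase n) :
    fderiv ℝ (fun y : Phase n => y.1 i) x v = v.1 i := by
  have h : (fun y : Phase n => y.1 i) =
      (ContinuousLinearMap.proj (R := ℝ) (φ := fun _ : Fin n => ℝ) i).comp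
        (ContinuousLinearMap.fst ℝ (Fin n → ℝ) (Fin n → ℝ)) := rfl
  rw [h, ContinuousLinearMap.fderiv]
  rfl

theorem fderiv_coord_p (i : Fin n) (x v : Phase n) :
    fderiv ℝ (fun y : Phase n => y.2 i) x v = v.2 i := by
  have h : (fun y : Phase n => y.2 i) =
      (ContinuousLinearMap.proj (R := ℝ) (φ := fun _ : Fin n => ℝ) i).comp
        (ContinuousLinearMap.snd ℝ (Fin n → ℝ) (Fin n → ℝ)) := rfl
  rw [h, ContinuousLinearMap.fderiv]
  rfl

theorem fderiv_comp_fst {W : (Fin n → ℝ) → ℝ} (hW : Differentiable ℝ W) (x v : Phase n) :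
    fderiv ℝ (fun y : Phase n => W y.1) x v = fderiv ℝ W x.1 v.1 := by
  have h : fderiv ℝ (fun y : Phase n => W y.1) x
      = (fderiv ℝ W x.1).comp (ContinuousLinearMap.fst ℝ (Fin n → ℝ) (Fin n → ℝ)) :=
    ((hW x.1).hasFDerivAt.comp x hasFDerivAt_fst).fderiv
  rw [h]; rfl

theorem fderiv_sum_pair_add {E : Type*} [NormedAddCommGroup E] [NormedSpace ℝ E]
    {ι : Type*} [Fintype ι] (a b c d : ι → E → ℝ) (x v : E)
    (ha : ∀ i, DifferentiableAt ℝ (a i) x) (hb : ∀ i, DifferentiableAt ℝ (b i) x)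
    (hc : ∀ i, DifferentiableAt ℝ (c i) x) (hd : ∀ i, DifferentiableAt ℝ (d i) x) :
    fderiv ℝ (fun y => ∑ i, (a i y * b i y + c i y * d i y)) x v
      = ∑ i, (fderiv ℝ (a i) x v * b i x + a i x * fderiv ℝ (b i) x v
          + (fderiv ℝ (c i) x v * d i x + c i x * fderiv ℝ (d i) x v)) := by
  have h : fderiv ℝ (fun y => ∑ i, (a i y * b i y + c i y * d i y)) x
      = ∑ i, fderiv ℝ (fun y => a i y * b i y + c i y * d i y) x :=
    fderiv_fun_sum fun i _ => (((ha i).mul (hb i)).add ((hc i).mul (hd i)))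
  rw [h, ContinuousLinearMap.sum_apply]
  refine Finset.sum_congr rfl fun i _ => ?_
  rw [fderiv_fun_add (f := fun y => a i y * b i y) (g := fun y => c i y * d i y) ((ha i).mul (hb i)) ((hc i).mul (hd i)),
    fderiv_fun_mul (ha i) (hb i), fderiv_fun_mul (hc i) (hd i)]
  simp
  ring

theorem fderiv_sum_pair_sub {E : Type*} [NormedAddCommGroup E] [NormedSpace ℝ E]
    {ι : Type*} [Fintype ι] (a b c d : ι → E → ℝ) (x v : E)
    (ha : ∀ i, DifferentiableAt ℝ (a i) x) (hb : ∀ i, DifferentiableAt ℝ (b i) x)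
    (hc : ∀ i, DifferentiableAt ℝ (c i) x) (hd : ∀ i, DifferentiableAt ℝ (d i) x) :
    fderiv ℝ (fun y => ∑ i, (a i y * b i y - c i y * d i y)) x v
      = ∑ i, (fderiv ℝ (a i) x v * b i x + a i x * fderiv ℝ (b i) x v
          - (fderiv ℝ (c i) x v * d i x + c i x * fderiv ℝ (d i) x v)) := by
  have h : fderiv ℝ (fun y => ∑ i, (a i y * b i y - c i y * d i y)) x
      = ∑ i, fderiv ℝ (fun y => a i y * b i y - c i y * d i y) x :=
    fderiv_fun_sum fun i _ => (((ha i).mul (hb i)).sub ((hc i).mul (hd i)))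
  rw [h, ContinuousLinearMap.sum_apply]
  refine Finset.sum_congr rfl fun i _ => ?_
  rw [fderiv_fun_sub (f := fun y => a i y * b i y) (g := fun y => c i y * d i y) ((ha i).mul (hb i)) ((hc i).mul (hd i)),
    fderiv_fun_mul (ha i) (hb i), fderiv_fun_mul (hc i) (hd i)]
  simp
  ring

theorem fderiv_mul_sub {E : Type*} [NormedAddCommGroup E] [NormedSpace ℝ E]
    {u v w z : E → ℝ} {x : E} (hu : DifferentiableAt ℝ u x) (hv : DifferentiableAt ℝ v x)
    (hw : DifferentiableAt ℝ w x) (hz : DifferentiableAt ℝ z x) (e : E) :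
    fderiv ℝ (fun y => u y * v y - w y * z y) x e
      = fderiv ℝ u x e * v x + u x * fderiv ℝ v x e
        - (fderiv ℝ w x e * z x + w x * fderiv ℝ z x e) := by
  rw [fderiv_fun_sub (f := fun y => u y * v y) (g := fun y => w y * z y) (hu.mul hv) (hw.mul hz), fderiv_fun_mul hu hv, fderiv_fun_mul hw hz]
  simp
  ring
variable {n : ℕ}

theorem contDiff_dq {f : Phase n → ℝ} (hf : ContDiff ℝ (⊤ : ℕ∞) f) (i : Fin n) :
    ContDiff ℝ (⊤ : ℕ∞) (fun x : Phase n => dq f i x) :=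
  contDiff_fderiv_apply hf _

theorem contDiff_dp {f : Phase n → ℝ} (hf : ContDiff ℝ (⊤ : ℕ∞) f) (i : Fin n) :
    ContDiff ℝ (⊤ : ℕ∞) (fun x : Phase n => dp f i x) :=
  contDiff_fderiv_apply hf _

theorem contDiff_dV_comp {V : (Fin n → ℝ) → ℝ} (hV : ContDiff ℝ (⊤ : ℕ∞) V) (i : Fin n) :
    ContDiff ℝ (⊤ : ℕ∞) (fun y : Phase n => dV V i y.1) :=
  (contDiff_fderiv_apply hV _).comp contDiff_fst

theorem contDiff_Zop (k : ℝ) {f : Phase n → ℝ} (hf : ContDiff ℝ (⊤ : ℕ∞) f) :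
    ContDiff ℝ (⊤ : ℕ∞) (Zop k f) := by
  refine ContDiff.sum fun i _ => ?_
  exact ((contDiff_coord_q i).mul (contDiff_dq hf i)).add
    ((contDiff_const.mul (contDiff_coord_p i)).mul (contDiff_dp hf i))

theorem contDiff_Xop (m : Fin n → ℝ) {V : (Fin n → ℝ) → ℝ} (hV : ContDiff ℝ (⊤ : ℕ∞) V)
    {f : Phase n → ℝ} (hf : ContDiff ℝ (⊤ : ℕ∞) f) :
    ContDiff ℝ (⊤ : ℕ∞) (Xop m V f) := by
  refine ContDiff.sum fun i _ => ?_
  exact (((contDiff_coord_p i).div_const (m i)).mul (contDiff_dq hf i)).sub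
    ((contDiff_dV_comp hV i).mul (contDiff_dp hf i))

theorem fderiv_Zop (k : ℝ) {f : Phase n → ℝ} (hf : ContDiff ℝ (⊤ : ℕ∞) f) (x v : Phase n) :
    fderiv ℝ (Zop k f) x v
      = ∑ i, (v.1 i * dq f i x
          + x.1 i * fderiv ℝ (fun y => fderiv ℝ f y (Pi.single i 1, 0)) x v
          + (k / 2 * v.2 i * dp f i x
          + k / 2 * x.2 i * fderiv ℝ (fun y => fderiv ℝ f y (0, Pi.single i 1)) x v)) := by
  have h := fderiv_sum_pair_add (fun i (y : Phase n) => y.1 i) (fun i y => dq f i y)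
    (fun i y => k / 2 * y.2 i) (fun i y => dp f i y) x v
    (fun i => ((contDiff_coord_q i).differentiable (by simp)).differentiableAt)
    (fun i => ((contDiff_dq hf i).differentiable (by simp)).differentiableAt)
    (fun i => ((contDiff_const.mul (contDiff_coord_p i)).differentiable (by simp)).differentiableAt)
    (fun i => ((contDiff_dp hf i).differentiable (by simp)).differentiableAt)
  have hZ : Zop k f = fun y => ∑ i, (y.1 i * dq f i y + k / 2 * y.2 i * dp f i y) := rfl
  rw [hZ, h]
  refine Finset.sum_congr rfl fun i _ => ?_
  have hq : fderiv ℝ (fun y : Phase n => y.1 i) x v = v.1 i := fderiv_coord_q i x v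
  have hp : fderiv ℝ (fun y : Phase n => k / 2 * y.2 i) x v = k / 2 * v.2 i := by
    rw [fderiv_const_mul ((contDiff_coord_p i).differentiable (by simp)).differentiableAt]
    simp [fderiv_coord_p i x v]
  rw [hq, hp]
  simp only [dq, dp]

theorem fderiv_Xop (m : Fin n → ℝ) {V : (Fin n → ℝ) → ℝ} (hV : ContDiff ℝ (⊤ : ℕ∞) V)
    {f : Phase n → ℝ} (hf : ContDiff ℝ (⊤ : ℕ∞) f) (x v : Phase n) :
    fderiv ℝ (Xop m V f) x v
      = ∑ i, (v.2 i / m i * dq f i x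
          + x.2 i / m i * fderiv ℝ (fun y => fderiv ℝ f y (Pi.single i 1, 0)) x v
          - (fderiv ℝ (dV V i) x.1 v.1 * dp f i x
          + dV V i x.1 * fderiv ℝ (fun y => fderiv ℝ f y (0, Pi.single i 1)) x v)) := by
  have h := fderiv_sum_pair_sub (fun i (y : Phase n) => y.2 i / m i) (fun i y => dq f i y)
    (fun i y => dV V i y.1) (fun i y => dp f i y) x v
    (fun i => (((contDiff_coord_p i).div_const (m i)).differentiable (by simp)).differentiableAt)
    (fun i => ((contDiff_dq hf i).differentiable (by simp)).differentiableAt)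
    (fun i => ((contDiff_dV_comp hV i).differentiable (by simp)).differentiableAt)
    (fun i => ((contDiff_dp hf i).differentiable (by simp)).differentiableAt)
  have hX : Xop m V f = fun y => ∑ i, (y.2 i / m i * dq f i y - dV V i y.1 * dp f i y) := rfl
  rw [hX, h]
  refine Finset.sum_congr rfl fun i _ => ?_
  have hq : fderiv ℝ (fun y : Phase n => y.2 i / m i) x v = v.2 i / m i := by
    simp only [div_eq_mul_inv]
    rw [fderiv_mul_const ((contDiff_coord_p i).differentiable (by simp)).differentiableAt]
    simp [fderiv_coord_p i x v, mul_comm]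
  have hVc : fderiv ℝ (fun y : Phase n => dV V i y.1) x v = fderiv ℝ (dV V i) x.1 v.1 :=
    fderiv_comp_fst ((contDiff_fderiv_apply hV _).differentiable (by simp)) x v
  rw [hq, hVc]
  simp only [dq, dp]

theorem fderiv_sum_mul {E : Type*} [NormedAddCommGroup E] [NormedSpace ℝ E]
    {ι : Type*} [Fintype ι] (a b : ι → E → ℝ) (x v : E)
    (ha : ∀ i, DifferentiableAt ℝ (a i) x) (hb : ∀ i, DifferentiableAt ℝ (b i) x) :
    fderiv ℝ (fun y => ∑ i, a i y * b i y) x v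
      = ∑ i, (fderiv ℝ (a i) x v * b i x + a i x * fderiv ℝ (b i) x v) := by
  have h : fderiv ℝ (fun y => ∑ i, a i y * b i y) x
      = ∑ i, fderiv ℝ (fun y => a i y * b i y) x :=
    fderiv_fun_sum fun i _ => ((ha i).mul (hb i))
  rw [h, ContinuousLinearMap.sum_apply]
  refine Finset.sum_congr rfl fun i _ => ?_
  rw [fderiv_fun_mul (ha i) (hb i)]
  simp
  ring

theorem fderiv_pi_coord (i : Fin n) (q v : Fin n → ℝ) :
    fderiv ℝ (fun q : Fin n → ℝ => q i) q v = v i := by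
  have h : (fun q : Fin n → ℝ => q i)
      = ContinuousLinearMap.proj (R := ℝ) (φ := fun _ : Fin n => ℝ) i := rfl
  rw [h, ContinuousLinearMap.fderiv]
  rfl

theorem dV_symm {V : (Fin n → ℝ) → ℝ} (hV : ContDiff ℝ (⊤ : ℕ∞) V) (q : Fin n → ℝ) (i j : Fin n) :
    fderiv ℝ (dV V i) q (Pi.single j 1) = fderiv ℝ (dV V j) q (Pi.single i 1) := by
  have h1 : dV V i = fun q => fderiv ℝ V q (Pi.single i 1) := rfl
  have h2 : dV V j = fun q => fderiv ℝ V q (Pi.single j 1) := rfl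
  rw [h1, h2]
  exact D2_symm hV _ _ q

theorem euler_diff {V : (Fin n → ℝ) → ℝ} (hV : ContDiff ℝ (⊤ : ℕ∞) V) {k : ℝ}
    (hEuler : ∀ q : Fin n → ℝ, ∑ i, q i * dV V i q = k * V q) (q : Fin n → ℝ) (l : Fin n) :
    ∑ i, q i * fderiv ℝ (dV V i) q (Pi.single l 1) = (k - 1) * dV V l q := by
  have hfun : (fun q : Fin n → ℝ => ∑ i, q i * dV V i q) = fun q => k * V q := funext hEuler
  have h1 := fderiv_sum_mul (fun i (q : Fin n → ℝ) => q i) (fun i => dV V i) q (Pi.single l 1)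
    (fun i => ((contDiff_apply ℝ ℝ i).differentiable one_ne_zero).differentiableAt)
    (fun i => ((contDiff_fderiv_apply hV (Pi.single i 1)).differentiable (by simp)).differentiableAt)
  rw [hfun] at h1
  have h2 : fderiv ℝ (fun q : Fin n → ℝ => k * V q) q (Pi.single l 1) = k * dV V l q := by
    rw [fderiv_const_mul ((hV.differentiable (by simp)).differentiableAt)]
    rfl
  rw [h2] at h1
  have h3 : ∑ i, (fderiv ℝ (fun q : Fin n → ℝ => q i) q (Pi.single l 1) * dV V i q
      + q i * fderiv ℝ (dV V i) q (Pi.single l 1))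
      = dV V l q + ∑ i, q i * fderiv ℝ (dV V i) q (Pi.single l 1) := by
    rw [Finset.sum_add_distrib]
    congr 1
    have : ∀ i, fderiv ℝ (fun q : Fin n → ℝ => q i) q (Pi.single l 1) * dV V i q
        = (if i = l then dV V i q else 0) := by
      intro i
      rw [fderiv_pi_coord, Pi.single_apply]
      by_cases h : i = l <;> simp [h]
    rw [Finset.sum_congr rfl fun i _ => this i, Finset.sum_ite_eq' Finset.univ l]
    simp
  rw [h3] at h1
  linarith

theorem single_sum_eval (j : Fin n) (F : Fin n → ℝ) :
    ∑ i, (Pi.single j 1 : Fin n → ℝ) i * F i = F j := by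
  have : ∀ i, (Pi.single j 1 : Fin n → ℝ) i * F i = if i = j then F i else 0 := by
    intro i
    rw [Pi.single_apply]
    by_cases h : i = j <;> simp [h]
  rw [Finset.sum_congr rfl fun i _ => this i, Finset.sum_ite_eq' Finset.univ j]
  simp

variable {f : Phase n → ℝ} {V : (Fin n → ℝ) → ℝ}

theorem dq_Zop (k : ℝ) (hf : ContDiff ℝ (⊤ : ℕ∞) f) (x : Phase n) (j : Fin n) :
    fderiv ℝ (Zop k f) x (Pi.single j 1, 0)
      = dq f j x
        + ∑ i, (x.1 i * fderiv ℝ (fun y => fderiv ℝ f y (Pi.single i 1, 0)) x (Pi.single j 1, 0)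
          + k / 2 * x.2 i * fderiv ℝ (fun y => fderiv ℝ f y (0, Pi.single i 1)) x
              (Pi.single j 1, 0)) := by
  rw [fderiv_Zop k hf x _]
  have : ∀ i : Fin n,
      ((Pi.single j 1 : Fin n → ℝ), (0 : Fin n → ℝ)).1 i * dq f i x
        + x.1 i * fderiv ℝ (fun y => fderiv ℝ f y (Pi.single i 1, 0)) x (Pi.single j 1, 0)
        + (k / 2 * ((Pi.single j 1 : Fin n → ℝ), (0 : Fin n → ℝ)).2 i * dp f i x
          + k / 2 * x.2 i * fderiv ℝ (fun y => fderiv ℝ f y (0, Pi.single i 1)) x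
              (Pi.single j 1, 0))
      = (Pi.single j 1 : Fin n → ℝ) i * dq f i x
        + (x.1 i * fderiv ℝ (fun y => fderiv ℝ f y (Pi.single i 1, 0)) x (Pi.single j 1, 0)
          + k / 2 * x.2 i * fderiv ℝ (fun y => fderiv ℝ f y (0, Pi.single i 1)) x
              (Pi.single j 1, 0)) := by
    intro i
    simp only [Pi.zero_apply, mul_zero, zero_mul, add_zero, zero_add]
    ring
  rw [Finset.sum_congr rfl fun i _ => this i, Finset.sum_add_distrib, single_sum_eval]

theorem dp_Zop (k : ℝ) (hf : ContDiff ℝ (⊤ : ℕ∞) f) (x : Phase n) (j : Fin n) :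
    fderiv ℝ (Zop k f) x (0, Pi.single j 1)
      = k / 2 * dp f j x
        + ∑ i, (x.1 i * fderiv ℝ (fun y => fderiv ℝ f y (Pi.single i 1, 0)) x (0, Pi.single j 1)
          + k / 2 * x.2 i * fderiv ℝ (fun y => fderiv ℝ f y (0, Pi.single i 1)) x
              (0, Pi.single j 1)) := by
  rw [fderiv_Zop k hf x _]
  have : ∀ i : Fin n,
      ((0 : Fin n → ℝ), (Pi.single j 1 : Fin n → ℝ)).1 i * dq f i x
        + x.1 i * fderiv ℝ (fun y => fderiv ℝ f y (Pi.single i 1, 0)) x (0, Pi.single j 1)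
        + (k / 2 * ((0 : Fin n → ℝ), (Pi.single j 1 : Fin n → ℝ)).2 i * dp f i x
          + k / 2 * x.2 i * fderiv ℝ (fun y => fderiv ℝ f y (0, Pi.single i 1)) x
              (0, Pi.single j 1))
      = (Pi.single j 1 : Fin n → ℝ) i * (k / 2 * dp f i x)
        + (x.1 i * fderiv ℝ (fun y => fderiv ℝ f y (Pi.single i 1, 0)) x (0, Pi.single j 1)
          + k / 2 * x.2 i * fderiv ℝ (fun y => fderiv ℝ f y (0, Pi.single i 1)) x
              (0, Pi.single j 1)) := by
    intro i
    simp only [Pi.zero_apply, mul_zero, zero_mul, add_zero, zero_add]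
    ring
  rw [Finset.sum_congr rfl fun i _ => this i, Finset.sum_add_distrib, single_sum_eval]

theorem dq_Xop (m : Fin n → ℝ) (hV : ContDiff ℝ (⊤ : ℕ∞) V) (hf : ContDiff ℝ (⊤ : ℕ∞) f)
    (x : Phase n) (j : Fin n) :
    fderiv ℝ (Xop m V f) x (Pi.single j 1, 0)
      = ∑ i, (x.2 i / m i * fderiv ℝ (fun y => fderiv ℝ f y (Pi.single i 1, 0)) x
              (Pi.single j 1, 0)
          - (fderiv ℝ (dV V i) x.1 (Pi.single j 1) * dp f i x
            + dV V i x.1 * fderiv ℝ (fun y => fderiv ℝ f y (0, Pi.single i 1)) x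
                (Pi.single j 1, 0))) := by
  rw [fderiv_Xop m hV hf x _]
  refine Finset.sum_congr rfl fun i _ => ?_
  simp only [Pi.zero_apply, mul_zero, zero_mul, add_zero, zero_add, zero_div]

theorem dp_Xop (m : Fin n → ℝ) (hV : ContDiff ℝ (⊤ : ℕ∞) V) (hf : ContDiff ℝ (⊤ : ℕ∞) f)
    (x : Phase n) (j : Fin n) :
    fderiv ℝ (Xop m V f) x (0, Pi.single j 1)
      = dq f j x / m j
        + ∑ i, (x.2 i / m i * fderiv ℝ (fun y => fderiv ℝ f y (Pi.single i 1, 0)) x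
              (0, Pi.single j 1)
          - dV V i x.1 * fderiv ℝ (fun y => fderiv ℝ f y (0, Pi.single i 1)) x
              (0, Pi.single j 1)) := by
  rw [fderiv_Xop m hV hf x _]
  have : ∀ i : Fin n,
      ((0 : Fin n → ℝ), (Pi.single j 1 : Fin n → ℝ)).2 i / m i * dq f i x
        + x.2 i / m i * fderiv ℝ (fun y => fderiv ℝ f y (Pi.single i 1, 0)) x (0, Pi.single j 1)
        - (fderiv ℝ (dV V i) x.1 ((0 : Fin n → ℝ), (Pi.single j 1 : Fin n → ℝ)).1 * dp f i x
          + dV V i x.1 * fderiv ℝ (fun y => fderiv ℝ f y (0, Pi.single i 1)) x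
              (0, Pi.single j 1))
      = (Pi.single j 1 : Fin n → ℝ) i * (dq f i x / m i)
        + (x.2 i / m i * fderiv ℝ (fun y => fderiv ℝ f y (Pi.single i 1, 0)) x (0, Pi.single j 1)
          - dV V i x.1 * fderiv ℝ (fun y => fderiv ℝ f y (0, Pi.single i 1)) x
              (0, Pi.single j 1)) := by
    intro i
    have hz : fderiv ℝ (dV V i) x.1 ((0 : Fin n → ℝ), (Pi.single j 1 : Fin n → ℝ)).1 = 0 := by
      simp
    rw [hz]
    ring
  rw [Finset.sum_congr rfl fun i _ => this i, Finset.sum_add_distrib, single_sum_eval]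

theorem sum_antisym (F : Fin n → Fin n → ℝ) (hF : ∀ i j, F j i = - F i j) :
    ∑ j, ∑ i, F i j = 0 := by
  have h2 : ∑ j, ∑ i, F i j = ∑ j, ∑ i, F j i := Finset.sum_comm
  have h3 : ∑ j, ∑ i, F j i = ∑ j, ∑ i, (- F i j) :=
    Finset.sum_congr rfl fun j _ => Finset.sum_congr rfl fun i _ => hF i j
  have h4 : ∑ j, ∑ i, (- F i j) = - ∑ j, ∑ i, F i j :=
    (Finset.sum_congr rfl fun j _ => Finset.sum_neg_distrib _).trans (Finset.sum_neg_distrib _)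
  linarith [h2.trans (h3.trans h4)]

theorem abstract_comm (κ e : ℝ) (m d q p Fq Fp : Fin n → ℝ)
    (Qq Pq Qp Pp W : Fin n → Fin n → ℝ)
    (hQq : ∀ i j, Qq j i = Qq i j) (hPp : ∀ i j, Pp j i = Pp i j)
    (hQpPq : ∀ i j, Qp j i = Pq i j)
    (hEu : ∀ i, ∑ j, q j * W i j = e * d i) (he : e = 2 * κ - 1) :
    (∑ j, (p j / m j * (Fq j + ∑ i, (q i * Qq i j + κ * p i * Pq i j))
        - d j * (κ * Fp j + ∑ i, (q i * Qp i j + κ * p i * Pp i j))))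
      - (∑ j, (q j * (∑ i, (p i / m i * Qq i j - (W i j * Fp i + d i * Pq i j)))
        + κ * p j * (Fq j / m j + ∑ i, (p i / m i * Qp i j - d i * Pp i j))))
      = (1 - κ) * ∑ j, (p j / m j * Fq j - d j * Fp j) := by
  have h1 : (∑ j, (p j / m j * (Fq j + ∑ i, (q i * Qq i j + κ * p i * Pq i j))
        - d j * (κ * Fp j + ∑ i, (q i * Qp i j + κ * p i * Pp i j))))
      = (∑ j, (p j / m j * Fq j - κ * (d j * Fp j)))
        + ∑ j, ∑ i, (p j / m j * (q i * Qq i j + κ * p i * Pq i j)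
            - d j * (q i * Qp i j + κ * p i * Pp i j)) := by
    rw [← Finset.sum_add_distrib]
    refine Finset.sum_congr rfl fun j _ => ?_
    rw [Finset.sum_sub_distrib, ← Finset.mul_sum, ← Finset.mul_sum]
    ring
  have h2 : (∑ j, (q j * (∑ i, (p i / m i * Qq i j - (W i j * Fp i + d i * Pq i j)))
        + κ * p j * (Fq j / m j + ∑ i, (p i / m i * Qp i j - d i * Pp i j))))
      = (∑ j, κ * p j * (Fq j / m j))
        + ∑ j, ∑ i, (q j * (p i / m i * Qq i j - (W i j * Fp i + d i * Pq i j))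
            + κ * p j * (p i / m i * Qp i j - d i * Pp i j)) := by
    rw [← Finset.sum_add_distrib]
    refine Finset.sum_congr rfl fun j _ => ?_
    rw [Finset.sum_add_distrib, ← Finset.mul_sum, ← Finset.mul_sum]
    ring
  have h3 : (∑ j, ∑ i, (p j / m j * (q i * Qq i j + κ * p i * Pq i j)
            - d j * (q i * Qp i j + κ * p i * Pp i j)))
      - (∑ j, ∑ i, (q j * (p i / m i * Qq i j - (W i j * Fp i + d i * Pq i j))
            + κ * p j * (p i / m i * Qp i j - d i * Pp i j)))
      = ∑ j, ∑ i, q j * (W i j * Fp i) := by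
    rw [← Finset.sum_sub_distrib]
    have hmerge : ∀ j : Fin n,
        (∑ i, (p j / m j * (q i * Qq i j + κ * p i * Pq i j)
            - d j * (q i * Qp i j + κ * p i * Pp i j)))
          - (∑ i, (q j * (p i / m i * Qq i j - (W i j * Fp i + d i * Pq i j))
            + κ * p j * (p i / m i * Qp i j - d i * Pp i j)))
        = ∑ i, ((p j / m j * (q i * Qq i j + κ * p i * Pq i j)
            - d j * (q i * Qp i j + κ * p i * Pp i j)
            - (q j * (p i / m i * Qq i j - (W i j * Fp i + d i * Pq i j))
            + κ * p j * (p i / m i * Qp i j - d i * Pp i j))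
            - q j * (W i j * Fp i)) + q j * (W i j * Fp i)) := by
      intro j
      rw [← Finset.sum_sub_distrib]
      exact Finset.sum_congr rfl fun i _ => by ring
    rw [Finset.sum_congr rfl fun j _ => hmerge j]
    have hsplit : ∀ j : Fin n, (∑ i, ((p j / m j * (q i * Qq i j + κ * p i * Pq i j)
            - d j * (q i * Qp i j + κ * p i * Pp i j)
            - (q j * (p i / m i * Qq i j - (W i j * Fp i + d i * Pq i j))
            + κ * p j * (p i / m i * Qp i j - d i * Pp i j))
            - q j * (W i j * Fp i)) + q j * (W i j * Fp i)))
        = (∑ i, (p j / m j * (q i * Qq i j + κ * p i * Pq i j)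
            - d j * (q i * Qp i j + κ * p i * Pp i j)
            - (q j * (p i / m i * Qq i j - (W i j * Fp i + d i * Pq i j))
            + κ * p j * (p i / m i * Qp i j - d i * Pp i j))
            - q j * (W i j * Fp i))) + ∑ i, q j * (W i j * Fp i) :=
      fun j => Finset.sum_add_distrib
    rw [Finset.sum_congr rfl fun j _ => hsplit j, Finset.sum_add_distrib]
    have hanti : ∑ j, ∑ i, (p j / m j * (q i * Qq i j + κ * p i * Pq i j)
            - d j * (q i * Qp i j + κ * p i * Pp i j)
            - (q j * (p i / m i * Qq i j - (W i j * Fp i + d i * Pq i j))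
            + κ * p j * (p i / m i * Qp i j - d i * Pp i j))
            - q j * (W i j * Fp i)) = 0 := by
      refine sum_antisym _ fun i j => ?_
      have e1 := hQq i j
      have e2 := hPp i j
      have e3 := hQpPq i j
      have e4 := hQpPq j i
      rw [e1, e2, e3, e4]
      ring
    rw [hanti, zero_add]
  have h4 : ∑ j, ∑ i, q j * (W i j * Fp i) = ∑ j, e * (d j * Fp j) := by
    have hc : ∑ j, ∑ i, q j * (W i j * Fp i) = ∑ j, ∑ i, q i * (W j i * Fp j) :=
      Finset.sum_comm
    rw [hc]
    refine Finset.sum_congr rfl fun j _ => ?_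
    have : ∀ i : Fin n, q i * (W j i * Fp j) = q i * W j i * Fp j := fun i => by ring
    rw [Finset.sum_congr rfl fun i _ => this i, ← Finset.sum_mul, hEu j]
    ring
  have h5 : (∑ j, (p j / m j * Fq j - κ * (d j * Fp j))) - (∑ j, κ * p j * (Fq j / m j))
      + ∑ j, e * (d j * Fp j) = (1 - κ) * ∑ j, (p j / m j * Fq j - d j * Fp j) := by
    rw [Finset.mul_sum, ← Finset.sum_sub_distrib, ← Finset.sum_add_distrib]
    refine Finset.sum_congr rfl fun j _ => ?_
    rw [he]
    ring
  linarith [h1, h2, h3, h4, h5]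

theorem dV_contract {V : (Fin n → ℝ) → ℝ} (hV : ContDiff ℝ (⊤ : ℕ∞) V) {k : ℝ}
    (hEuler : ∀ q : Fin n → ℝ, ∑ i, q i * dV V i q = k * V q) (x : Phase n) (i : Fin n) :
    ∑ j, x.1 j * fderiv ℝ (dV V i) x.1 (Pi.single j 1) = (k - 1) * dV V i x.1 := by
  have : ∀ j : Fin n, x.1 j * fderiv ℝ (dV V i) x.1 (Pi.single j 1)
      = x.1 j * fderiv ℝ (dV V j) x.1 (Pi.single i 1) := fun j => by
    rw [dV_symm hV x.1 i j]
  rw [Finset.sum_congr rfl fun j _ => this j]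
  exact euler_diff hV hEuler x.1 i

theorem XZ_commutator (m : Fin n → ℝ) {k : ℝ} (hV : ContDiff ℝ (⊤ : ℕ∞) V)
    (hEuler : ∀ q : Fin n → ℝ, ∑ i, q i * dV V i q = k * V q)
    (hf : ContDiff ℝ (⊤ : ℕ∞) f) (x : Phase n) :
    Xop m V (Zop k f) x - Zop k (Xop m V f) x = (1 - k / 2) * Xop m V f x := by
  have hXZ : Xop m V (Zop k f) x
      = ∑ j, (x.2 j / m j * fderiv ℝ (Zop k f) x (Pi.single j 1, 0)
          - dV V j x.1 * fderiv ℝ (Zop k f) x (0, Pi.single j 1)) := rfl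
  have hZX : Zop k (Xop m V f) x
      = ∑ j, (x.1 j * fderiv ℝ (Xop m V f) x (Pi.single j 1, 0)
          + k / 2 * x.2 j * fderiv ℝ (Xop m V f) x (0, Pi.single j 1)) := rfl
  rw [hXZ, hZX]
  simp only [dq_Zop k hf, dp_Zop k hf, dq_Xop m hV hf, dp_Xop m hV hf]
  have hrhs : (1 - k / 2) * Xop m V f x
      = (1 - k / 2) * ∑ j, (x.2 j / m j * dq f j x - dV V j x.1 * dp f j x) := rfl
  rw [hrhs]
  exact abstract_comm (k / 2) (k - 1) m (fun j => dV V j x.1) x.1 x.2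
    (fun j => dq f j x) (fun j => dp f j x)
    (fun i j => fderiv ℝ (fun y => fderiv ℝ f y (Pi.single i 1, 0)) x (Pi.single j 1, 0))
    (fun i j => fderiv ℝ (fun y => fderiv ℝ f y (0, Pi.single i 1)) x (Pi.single j 1, 0))
    (fun i j => fderiv ℝ (fun y => fderiv ℝ f y (Pi.single i 1, 0)) x (0, Pi.single j 1))
    (fun i j => fderiv ℝ (fun y => fderiv ℝ f y (0, Pi.single i 1)) x (0, Pi.single j 1))
    (fun i j => fderiv ℝ (dV V i) x.1 (Pi.single j 1))
    (fun i j => D2_symm hf _ _ x) (fun i j => D2_symm hf _ _ x)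
    (fun i j => D2_symm hf _ _ x)
    (fun i => dV_contract hV hEuler x i) (by ring)

theorem bracketP_eq (m : Fin n → ℝ) (k : ℝ) (V : (Fin n → ℝ) → ℝ)
    (f g : Phase n → ℝ) (x : Phase n) :
    bracketP m k V f g x = Xop m V f x * Zop k g x - Zop k f x * Xop m V g x := by
  have hswap : ∑ i, ∑ j, Bcoef m k V i j x * (dp f j x * dq g i x)
      = ∑ i, ∑ j, Bcoef m k V j i x * (dp f i x * dq g j x) := Finset.sum_comm
  have hL : bracketP m k V f g x
      = ∑ i, ∑ j, (Acoef m i j x * (dq f i x * dq g j x)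
          + Bcoef m k V i j x * (dq f i x * dp g j x)
          + Ccoef k V i j x * (dp f i x * dp g j x))
        - ∑ i, ∑ j, Bcoef m k V i j x * (dp f j x * dq g i x) := by
    rw [bracketP, ← Finset.sum_sub_distrib]
    refine Finset.sum_congr rfl fun i _ => ?_
    rw [← Finset.sum_sub_distrib]
    exact Finset.sum_congr rfl fun j _ => by ring
  rw [hL, hswap, ← Finset.sum_sub_distrib]
  rw [Xop, Zop, Xop, Zop, Finset.sum_mul_sum, Finset.sum_mul_sum, ← Finset.sum_sub_distrib]
  refine Finset.sum_congr rfl fun i _ => ?_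
  rw [← Finset.sum_sub_distrib, ← Finset.sum_sub_distrib]
  refine Finset.sum_congr rfl fun j _ => ?_
  simp only [Acoef, Bcoef, Ccoef]
  ring

theorem Xop_mul_sub (m : Fin n → ℝ) (V : (Fin n → ℝ) → ℝ) {u v w z : Phase n → ℝ}
    {x : Phase n} (hu : DifferentiableAt ℝ u x) (hv : DifferentiableAt ℝ v x)
    (hw : DifferentiableAt ℝ w x) (hz : DifferentiableAt ℝ z x) :
    Xop m V (fun y => u y * v y - w y * z y) x
      = Xop m V u x * v x + u x * Xop m V v x
        - (Xop m V w x * z x + w x * Xop m V z x) := by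
  simp only [Xop, dq, dp]
  simp only [fderiv_mul_sub hu hv hw hz]
  rw [Finset.sum_mul, Finset.mul_sum, Finset.sum_mul, Finset.mul_sum,
    ← Finset.sum_add_distrib, ← Finset.sum_add_distrib, ← Finset.sum_sub_distrib]
  exact Finset.sum_congr rfl fun i _ => by ring

theorem Zop_mul_sub (k : ℝ) {u v w z : Phase n → ℝ}
    {x : Phase n} (hu : DifferentiableAt ℝ u x) (hv : DifferentiableAt ℝ v x)
    (hw : DifferentiableAt ℝ w x) (hz : DifferentiableAt ℝ z x) :
    Zop k (fun y => u y * v y - w y * z y) x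
      = Zop k u x * v x + u x * Zop k v x
        - (Zop k w x * z x + w x * Zop k z x) := by
  simp only [Zop, dq, dp]
  simp only [fderiv_mul_sub hu hv hw hz]
  rw [Finset.sum_mul, Finset.mul_sum, Finset.sum_mul, Finset.mul_sum,
    ← Finset.sum_add_distrib, ← Finset.sum_add_distrib, ← Finset.sum_sub_distrib]
  exact Finset.sum_congr rfl fun i _ => by ring


/-- the bracket `{·,·}′` satisfies the Jacobi identity, hence it is a
Poisson bracket. -/
theorem bracketP_jacobi (n : ℕ) (m : Fin n → ℝ) (hm : ∀ i, 0 < m i) (k : ℝ)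
    (V : (Fin n → ℝ) → ℝ) (hV : ContDiff ℝ (⊤ : ℕ∞) V)
    (hEuler : ∀ q : Fin n → ℝ, ∑ i, q i * dV V i q = k * V q)
    (f g h : Phase n → ℝ) (hf : ContDiff ℝ (⊤ : ℕ∞) f) (hg : ContDiff ℝ (⊤ : ℕ∞) g)
    (hh : ContDiff ℝ (⊤ : ℕ∞) h) :
    ∀ x : Phase n,
      bracketP m k V (fun y => bracketP m k V f g y) h x
        + bracketP m k V (fun y => bracketP m k V g h y) f x
        + bracketP m k V (fun y => bracketP m k V h f y) g x = 0 := by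
  intro x
  have dX : ∀ {u : Phase n → ℝ}, ContDiff ℝ (⊤ : ℕ∞) u → DifferentiableAt ℝ (Xop m V u) x :=
    fun hu => ((contDiff_Xop m hV hu).differentiable (by simp)).differentiableAt
  have dZ : ∀ {u : Phase n → ℝ}, ContDiff ℝ (⊤ : ℕ∞) u → DifferentiableAt ℝ (Zop k u) x :=
    fun hu => ((contDiff_Zop k hu).differentiable (by simp)).differentiableAt
  have hfg : (fun y => bracketP m k V f g y)
      = fun y => Xop m V f y * Zop k g y - Zop k f y * Xop m V g y :=
    funext fun y => bracketP_eq m k V f g y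
  have hgh : (fun y => bracketP m k V g h y)
      = fun y => Xop m V g y * Zop k h y - Zop k g y * Xop m V h y :=
    funext fun y => bracketP_eq m k V g h y
  have hhf : (fun y => bracketP m k V h f y)
      = fun y => Xop m V h y * Zop k f y - Zop k h y * Xop m V f y :=
    funext fun y => bracketP_eq m k V h f y
  rw [hfg, hgh, hhf, bracketP_eq, bracketP_eq, bracketP_eq]
  rw [Xop_mul_sub m V (dX hf) (dZ hg) (dZ hf) (dX hg),
      Zop_mul_sub k (dX hf) (dZ hg) (dZ hf) (dX hg),
      Xop_mul_sub m V (dX hg) (dZ hh) (dZ hg) (dX hh),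
      Zop_mul_sub k (dX hg) (dZ hh) (dZ hg) (dX hh),
      Xop_mul_sub m V (dX hh) (dZ hf) (dZ hh) (dX hf),
      Zop_mul_sub k (dX hh) (dZ hf) (dZ hh) (dX hf)]
  have cf : Xop m V (Zop k f) x = Zop k (Xop m V f) x + (1 - k / 2) * Xop m V f x := by
    have := XZ_commutator m hV hEuler hf x; linarith
  have cg : Xop m V (Zop k g) x = Zop k (Xop m V g) x + (1 - k / 2) * Xop m V g x := by
    have := XZ_commutator m hV hEuler hg x; linarith
  have ch : Xop m V (Zop k h) x = Zop k (Xop m V h) x + (1 - k / 2) * Xop m V h x := by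
    have := XZ_commutator m hV hEuler hh x; linarith
  rw [cf, cg, ch]
  ring
end
end

section
/- For every smooth function f : ℝⁿ×ℝⁿ → ℝ one has {f, H}^ = ((k+2)/2)·H·{f, H} at every point of ℝⁿ×ℝⁿ, where {f,g}^ = (1 − k/2)·H·{f,g} + {f,g}′; this is the tensor analogue of Lagrange's identity: P̂ dH = ((k+2)/2)·H·P dH. -/
open scoped BigOperators

noncomputable section

/-- The bracket `{f,g}^ = (1 − k/2)·H·{f,g} + {f,g}′` of the bivector
`P̂ = (1 − k/2)H·P + P′`. -/
def bracketHat {n : ℕ} (m : Fin n → ℝ) (k : ℝ) (V : (Fin n → ℝ) → ℝ)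
    (f g : Phase n → ℝ) (x : Phase n) : ℝ :=
  (1 - k / 2) * Ham m V x * bracketC f g x + bracketP m k V f g x

section Aux

lemma hasFDerivAt_Ham {n : ℕ} (m : Fin n → ℝ) (V : (Fin n → ℝ) → ℝ)
    (hV : Differentiable ℝ V) (x : Phase n) :
    HasFDerivAt (Ham m V)
      ((∑ i, ((2 * x.2 i / (2 * m i)) • ((ContinuousLinearMap.proj i).comp
          (ContinuousLinearMap.snd ℝ (Fin n → ℝ) (Fin n → ℝ)))))
        + (fderiv ℝ V x.1).comp (ContinuousLinearMap.fst ℝ (Fin n → ℝ) (Fin n → ℝ))) x := by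
  have h1 : HasFDerivAt (fun y : Phase n => V y.1)
      ((fderiv ℝ V x.1).comp (ContinuousLinearMap.fst ℝ (Fin n → ℝ) (Fin n → ℝ))) x :=
    ((hV x.1).hasFDerivAt).comp x (hasFDerivAt_fst)
  have h2 : HasFDerivAt (fun y : Phase n => ∑ i, y.2 i ^ 2 / (2 * m i))
      (∑ i, ((2 * x.2 i / (2 * m i)) • ((ContinuousLinearMap.proj i).comp
          (ContinuousLinearMap.snd ℝ (Fin n → ℝ) (Fin n → ℝ))))) x := by
    apply HasFDerivAt.fun_sum
    intro i _
    have hb : HasFDerivAt (fun y : Phase n => y.2 i)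
        ((ContinuousLinearMap.proj i).comp (ContinuousLinearMap.snd ℝ (Fin n → ℝ) (Fin n → ℝ))) x :=
      ((ContinuousLinearMap.proj i).comp
        (ContinuousLinearMap.snd ℝ (Fin n → ℝ) (Fin n → ℝ))).hasFDerivAt
    have h := ((hb.mul hb).const_mul ((2 * m i)⁻¹))
    have hfun : (fun y : Phase n => y.2 i ^ 2 / (2 * m i))
        = fun y : Phase n => (2 * m i)⁻¹ * (y.2 i * y.2 i) := by
      funext y; rw [sq]; ring
    rw [hfun]
    convert h using 1
    case e'_8 => rfl
    case e'_11 => rfl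
    have hc : (2 * x.2 i / (2 * m i)) = (2 * m i)⁻¹ * x.2 i + (2 * m i)⁻¹ * x.2 i := by ring
    rw [hc, add_smul, smul_add, smul_smul]
  exact h2.add h1

lemma dq_Ham {n : ℕ} (m : Fin n → ℝ) (V : (Fin n → ℝ) → ℝ)
    (hV : Differentiable ℝ V) (j : Fin n) (x : Phase n) :
    dq (Ham m V) j x = dV V j x.1 := by
  rw [dq, (hasFDerivAt_Ham m V hV x).fderiv, dV]
  simp

lemma dp_Ham {n : ℕ} (m : Fin n → ℝ) (V : (Fin n → ℝ) → ℝ)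
    (hV : Differentiable ℝ V) (j : Fin n) (x : Phase n) :
    dp (Ham m V) j x = x.2 j / m j := by
  rw [dp, (hasFDerivAt_Ham m V hV x).fderiv]
  simp [Pi.single_apply, mul_ite, Finset.sum_ite_eq']
  rw [mul_div_mul_left _ _ (two_ne_zero)]

lemma key_alg (n : ℕ) (a b g qq pp mm : Fin n → ℝ) (k W : ℝ)
    (hE : ∑ i, qq i * g i = k * W) :
    ∑ i, ∑ j,
      ((pp i * qq j / mm i - pp j * qq i / mm j) * (a i * g j)
        + (k / (2 * mm i) * (pp i * pp j) + qq i * g j) * (a i * (pp j / mm j) - b j * g i)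
        + (k / 2 * (pp i * g j - pp j * g i)) * (b i * (pp j / mm j)))
      = k * ((∑ i, pp i ^ 2 / (2 * mm i)) + W)
          * (∑ i, (a i * (pp i / mm i) - b i * g i)) := by
  have hP1 : (∑ j, qq j * g j) = k * W := hE
  have inner : ∀ i, ∑ j,
      ((pp i * qq j / mm i - pp j * qq i / mm j) * (a i * g j)
        + (k / (2 * mm i) * (pp i * pp j) + qq i * g j) * (a i * (pp j / mm j) - b j * g i)
        + (k / 2 * (pp i * g j - pp j * g i)) * (b i * (pp j / mm j)))
      = (a i * pp i / mm i) * (∑ j, qq j * g j)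
        - (qq i * a i) * (∑ j, g j * pp j / mm j)
        + (k / 2) * (a i * pp i / mm i) * (∑ j, pp j ^ 2 / mm j)
        + (qq i * a i) * (∑ j, g j * pp j / mm j)
        - (k / 2) * (pp i * g i / mm i) * (∑ j, pp j * b j)
        - (qq i * g i) * (∑ j, g j * b j)
        + (k / 2) * (pp i * b i) * (∑ j, g j * pp j / mm j)
        - (k / 2) * (g i * b i) * (∑ j, pp j ^ 2 / mm j) := by
    intro i
    simp only [Finset.mul_sum, ← Finset.sum_add_distrib, ← Finset.sum_sub_distrib]
    exact Finset.sum_congr rfl fun j _ => by ring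
  rw [Finset.sum_congr rfl fun i _ => inner i]
  simp only [Finset.sum_add_distrib, Finset.sum_sub_distrib, ← Finset.sum_mul]
  have e1 : (∑ i, k / 2 * (a i * pp i / mm i)) = k / 2 * ∑ i, a i * pp i / mm i :=
    (Finset.mul_sum _ _ _).symm
  have e2 : (∑ i, k / 2 * (pp i * g i / mm i)) = k / 2 * ∑ i, g i * pp i / mm i := by
    rw [Finset.mul_sum]; exact Finset.sum_congr rfl fun i _ => by ring
  have e3 : (∑ i, k / 2 * (pp i * b i)) = k / 2 * ∑ i, pp i * b i :=
    (Finset.mul_sum _ _ _).symm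
  have e4 : (∑ i, k / 2 * (g i * b i)) = k / 2 * ∑ i, g i * b i :=
    (Finset.mul_sum _ _ _).symm
  have h3 : (∑ i, pp i ^ 2 / (2 * mm i)) = (∑ i, pp i ^ 2 / mm i) / 2 := by
    rw [Finset.sum_div]; exact Finset.sum_congr rfl fun i _ => by ring
  have e5 : (∑ i, a i * (pp i / mm i)) = ∑ i, a i * pp i / mm i :=
    Finset.sum_congr rfl fun i _ => by ring
  have e6 : (∑ i, b i * g i) = ∑ i, g i * b i :=
    Finset.sum_congr rfl fun i _ => by ring
  rw [e1, e2, e3, e4, h3, e5, e6, hP1]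
  ring

end Aux

/-- the tensor analogue of Lagrange's identity:
`{f,H}^ = ((k+2)/2)·H·{f,H}` for every smooth `f`, i.e. `P̂ dH = ((k+2)/2)·H·P dH`. -/

theorem bracketHat_apply_H (n : ℕ) (m : Fin n → ℝ) (hm : ∀ i, 0 < m i) (k : ℝ)
    (V : (Fin n → ℝ) → ℝ) (hV : ContDiff ℝ (⊤ : ℕ∞) V)
    (hEuler : ∀ q : Fin n → ℝ, ∑ i, q i * dV V i q = k * V q)
    (f : Phase n → ℝ) (hf : ContDiff ℝ (⊤ : ℕ∞) f) :
    ∀ x : Phase n,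
      bracketHat m k V f (Ham m V) x = (k + 2) / 2 * Ham m V x * bracketC f (Ham m V) x := by
  intro x
  have hVd : Differentiable ℝ V := hV.differentiable (by simp)
  simp only [bracketHat, bracketP, bracketC, Acoef, Bcoef, Ccoef,
    dq_Ham m V hVd, dp_Ham m V hVd]
  rw [key_alg n (fun i => dq f i x) (fun i => dp f i x) (fun i => dV V i x.1)
    x.1 x.2 m k (V x.1) (hEuler x.1)]
  simp only [Ham]
  ring
end
end
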